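/- For any real λ ≠ 0, there are uncountably many real numbers α > 1 such that the sequence (λα^n) is not uniformly distributed modulo 1. -/

import Mathlib

open Filter

/-- A sequence of real numbers is uniformly distributed modulo 1 (Weyl's criterion). -/
def UDMod1 (x : ℕ → ℝ) : Prop :=
  ∀ h : ℤ, h ≠ 0 →
    Tendsto (fun N : ℕ => (N : ℂ)⁻¹ * ∑ n ∈ Finset.Icc 1 N,
      Complex.exp (2 * Real.pi * Complex.I * h * x n)) atTop (nhds 0)

/-!
Fix `μ = |lam| > 0`. If `μ α ^ n` lies within `1/8` of an integer for every `n ≥ 1`, then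
`cos (2π lam α ^ n) ≥ 1/2` for all `n ≥ 1`, so the Weyl sums with `h = 1` have real part at least
`1/2` and `(lam α ^ n)` is not uniformly distributed.

Such `α` are built by nested intervals. The `α ≥ 0` with `|μ α ^ n - m| ≤ 1/8` form an interval
`[a, b]`, and as `α` runs over it `μ α ^ (n + 1)` sweeps an interval of length at least `a / 4`.
Once `a ≥ 9` this contains two windows `[m' - 1/8, m' + 1/8]` with consecutive integers `m'`,
so at each step there is a binary choice. Every `s : Set ℕ` thus yields a nested sequence of
intervals, whose intersection point `α` determines `s`; hence there are uncountably many.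
-/

open Set Real

lemma half_le_cos_two_pi_mul {x : ℝ} {m : ℤ} (h : |x - m| ≤ 1 / 8) : 1 / 2 ≤ cos (2 * π * x) := by
  have hsq : (2 * π * (x - m)) ^ 2 ≤ 1 := calc
    (2 * π * (x - m)) ^ 2 = (2 * π) ^ 2 * |x - m| ^ 2 := by rw [sq_abs]; ring
    _ ≤ 8 ^ 2 * (1 / 8) ^ 2 := by gcongr; linarith [pi_le_four]
    _ = 1 := by norm_num
  rw [show 2 * π * x = 2 * π * (x - m) + m * (2 * π) by ring, cos_add_int_mul_two_pi]
  linarith [one_sub_sq_div_two_le_cos (x := 2 * π * (x - m))]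

lemma not_UDMod1_of_forall_abs_sub_int_le (x : ℕ → ℝ)
    (hx : ∀ n, 1 ≤ n → ∃ m : ℤ, |x n - m| ≤ 1 / 8) : ¬UDMod1 x := by
  intro hud
  have hre := (Complex.continuous_re.tendsto 0).comp (hud 1 one_ne_zero)
  obtain ⟨N, hN1, hN⟩ := ((eventually_ge_atTop 1).and
    (hre.eventually_lt_const (by norm_num : (0 : ℂ).re < 1 / 2))).exists
  have hterm : ∀ n ∈ Finset.Icc 1 N,
      1 / 2 ≤ (Complex.exp (2 * π * Complex.I * ((1 : ℤ) : ℂ) * (x n : ℂ))).re := by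
    intro n hn
    obtain ⟨m, hm⟩ := hx n (Finset.mem_Icc.1 hn).1
    have : 2 * π * Complex.I * ((1 : ℤ) : ℂ) * (x n : ℂ) = ((2 * π * x n : ℝ) : ℂ) * Complex.I := by
      push_cast; ring
    rw [this, Complex.exp_ofReal_mul_I_re]
    exact half_le_cos_two_pi_mul hm
  have hsum := Finset.card_nsmul_le_sum _ _ _ hterm
  rw [Nat.card_Icc, Nat.add_sub_cancel, nsmul_eq_mul] at hsum
  have hNpos : (0 : ℝ) < N := by exact_mod_cast hN1
  have : 1 / 2 ≤ ((N : ℂ)⁻¹ * ∑ n ∈ Finset.Icc 1 N,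
      Complex.exp (2 * π * Complex.I * ((1 : ℤ) : ℂ) * (x n : ℂ))).re := by
    rw [← Complex.ofReal_natCast, ← Complex.ofReal_inv, Complex.re_ofReal_mul, Complex.re_sum,
      le_inv_mul_iff₀ hNpos]
    linarith
  exact lt_irrefl _ (this.trans_lt hN)

lemma Int.eq_of_abs_sub_le {x r : ℝ} {m m' : ℤ} (hr : r < 1 / 2) (h : |x - m| ≤ r)
    (h' : |x - m'| ≤ r) : m = m' := by
  have : |((m - m' : ℤ) : ℝ)| < 1 := by
    push_cast
    calc |(m : ℝ) - m'| ≤ |x - m| + |x - m'| := by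
          rw [abs_sub_comm x m]; exact abs_sub_le _ _ _
      _ < 1 := by linarith
  rw [← Int.cast_abs, ← Int.cast_one, Int.cast_lt, Int.abs_lt_one_iff] at this
  omega

lemma exists_abs_mul_sub_int_le {a y r : ℝ} {m : ℤ} (h : |(|a|) * y - m| ≤ r) :
    ∃ m' : ℤ, |a * y - m'| ≤ r := by
  rcases abs_choice a with ha | ha
  · exact ⟨m, by rwa [ha] at h⟩
  · refine ⟨-m, ?_⟩
    rw [ha] at h
    rw [← abs_neg]
    push_cast
    convert h using 2
    ring

lemma not_countable_of_injective_set_nat {α : Type*} {S : Set α} {f : Set ℕ → α}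
    (hf : Function.Injective f) (hS : ∀ s, f s ∈ S) : ¬S.Countable := by
  intro hcount
  have := hcount.to_subtype
  have : Countable (Set ℕ) := (hf.codRestrict hS).countable
  obtain ⟨g, hg⟩ := Countable.exists_injective_nat (Set ℕ)
  exact Function.cantor_injective g hg

namespace NearIntPowers

variable {μ : ℝ}

noncomputable def root (μ : ℝ) (n : ℕ) (y : ℝ) : ℝ := (y / μ) ^ (n⁻¹ : ℝ)

lemma root_nonneg (hμ : 0 < μ) (n : ℕ) {y : ℝ} (hy : 0 ≤ y) : 0 ≤ root μ n y :=
  rpow_nonneg (div_nonneg hy hμ.le) _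

lemma mul_root_pow (hμ : 0 < μ) {n : ℕ} (hn : n ≠ 0) {y : ℝ} (hy : 0 ≤ y) :
    μ * root μ n y ^ n = y := by
  rw [root, rpow_inv_natCast_pow (div_nonneg hy hμ.le) hn, mul_div_cancel₀ _ hμ.ne']

lemma le_iff_mul_pow_le_mul_pow (hμ : 0 < μ) {n : ℕ} (hn : n ≠ 0) {α β : ℝ} (hα : 0 ≤ α)
    (hβ : 0 ≤ β) :
    α ≤ β ↔ μ * α ^ n ≤ μ * β ^ n := by
  rw [mul_le_mul_iff_right₀ hμ, pow_le_pow_iff_left₀ hα hβ hn]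

lemma root_le_iff (hμ : 0 < μ) {n : ℕ} (hn : n ≠ 0) {y α : ℝ} (hy : 0 ≤ y) (hα : 0 ≤ α) :
    root μ n y ≤ α ↔ y ≤ μ * α ^ n := by
  rw [le_iff_mul_pow_le_mul_pow hμ hn (root_nonneg hμ n hy) hα, mul_root_pow hμ hn hy]

lemma le_root_iff (hμ : 0 < μ) {n : ℕ} (hn : n ≠ 0) {y α : ℝ} (hy : 0 ≤ y) (hα : 0 ≤ α) :
    α ≤ root μ n y ↔ μ * α ^ n ≤ y := by
  rw [le_iff_mul_pow_le_mul_pow hμ hn hα (root_nonneg hμ n hy), mul_root_pow hμ hn hy]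

noncomputable def lower (μ : ℝ) (n : ℕ) (m : ℤ) : ℝ := root μ n (m - 1 / 8)

noncomputable def upper (μ : ℝ) (n : ℕ) (m : ℤ) : ℝ := root μ n (m + 1 / 8)

lemma sub_eighth_nonneg {m : ℤ} (hm : 0 < m) : (0 : ℝ) ≤ m - 1 / 8 := by
  have : (1 : ℝ) ≤ m := by exact_mod_cast hm
  linarith

lemma lower_nonneg (hμ : 0 < μ) (n : ℕ) {m : ℤ} (hm : 0 < m) : 0 ≤ lower μ n m :=
  root_nonneg hμ n (sub_eighth_nonneg hm)

lemma abs_mul_pow_sub_le (hμ : 0 < μ) {n : ℕ} (hn : n ≠ 0) {m : ℤ} (hm : 0 < m) {α : ℝ}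
    (hα : α ∈ Icc (lower μ n m) (upper μ n m)) : |μ * α ^ n - m| ≤ 1 / 8 := by
  have hm' := sub_eighth_nonneg hm
  have hα0 : 0 ≤ α := (root_nonneg hμ n hm').trans hα.1
  have h1 := (root_le_iff hμ hn hm' hα0).1 hα.1
  have h2 := (le_root_iff hμ hn (by linarith) hα0).1 hα.2
  rw [abs_le]; constructor <;> linarith

lemma lower_le_upper (hμ : 0 < μ) {n : ℕ} (hn : n ≠ 0) {m : ℤ} (hm : 0 < m) :
    lower μ n m ≤ upper μ n m := by
  have hm' := sub_eighth_nonneg hm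
  rw [lower, upper, le_root_iff hμ hn (by linarith) (root_nonneg hμ n hm'), mul_root_pow hμ hn hm']
  linarith

/-- The least `m'` whose window at exponent `n + 1` lies above `lower μ n m`, plus the bit `b`. -/
noncomputable def next (μ : ℝ) (n : ℕ) (m b : ℤ) : ℤ := ⌈μ * lower μ n m ^ (n + 1) + 1 / 8⌉ + b

lemma next_pos (hμ : 0 < μ) (n : ℕ) {m b : ℤ} (hm : 0 < m) (hb : 0 ≤ b) : 0 < next μ n m b := by
  have : 0 < ⌈μ * lower μ n m ^ (n + 1) + 1 / 8⌉ :=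
    Int.ceil_pos.2 (by have := root_nonneg hμ n (sub_eighth_nonneg hm); positivity)
  rw [next]; omega

lemma lower_le_lower_next (hμ : 0 < μ) (n : ℕ) {m b : ℤ} (hm : 0 < m) (hb : 0 ≤ b) :
    lower μ n m ≤ lower μ (n + 1) (next μ n m b) := by
  have hceil := Int.le_ceil (μ * lower μ n m ^ (n + 1) + 1 / 8)
  have hb' : (0 : ℝ) ≤ b := by exact_mod_cast hb
  change _ ≤ root μ (n + 1) _
  rw [le_root_iff hμ n.add_one_ne_zero (sub_eighth_nonneg (next_pos hμ n hm hb))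
    (lower_nonneg hμ n hm), next]
  push_cast
  linarith

lemma upper_next_le_upper (hμ : 0 < μ) {n : ℕ} (hn : n ≠ 0) {m b : ℤ} (hm : 0 < m) (hb₀ : 0 ≤ b)
    (hb₁ : b ≤ 1) (h9 : 9 ≤ lower μ n m) : upper μ (n + 1) (next μ n m b) ≤ upper μ n m := by
  have hlo : μ * lower μ n m ^ (n + 1) = (m - 1 / 8) * lower μ n m := by
    rw [pow_succ, ← mul_assoc, lower, mul_root_pow hμ hn (sub_eighth_nonneg hm)]
  have hhi : μ * upper μ n m ^ (n + 1) = (m + 1 / 8) * upper μ n m := by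
    have : (0 : ℝ) ≤ m + 1 / 8 := by linarith [sub_eighth_nonneg hm]
    rw [pow_succ, ← mul_assoc, upper, mul_root_pow hμ hn this]
  have hle := lower_le_upper hμ hn hm
  have hceil := Int.ceil_lt_add_one (μ * lower μ n m ^ (n + 1) + 1 / 8)
  have hb' : (b : ℝ) ≤ 1 := by exact_mod_cast hb₁
  have hm' : (1 : ℝ) ≤ m := by exact_mod_cast hm
  change root μ (n + 1) _ ≤ _
  have hnext : (0 : ℝ) ≤ next μ n m b + 1 / 8 := by
    have : (0 : ℝ) < next μ n m b := by exact_mod_cast next_pos hμ n hm hb₀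
    linarith
  rw [root_le_iff hμ n.add_one_ne_zero hnext ((lower_nonneg hμ n hm).trans hle), hhi, next]
  push_cast
  nlinarith

lemma indicator_one_nonneg {ι : Type*} (s : Set ι) (k : ι) : (0 : ℤ) ≤ s.indicator 1 k :=
  indicator_nonneg (fun _ _ => zero_le_one) k

lemma indicator_one_le_one {ι : Type*} (s : Set ι) (k : ι) : s.indicator (1 : ι → ℤ) k ≤ 1 :=
  indicator_apply_le' (fun _ => le_rfl) (fun _ => zero_le_one)

noncomputable def center (μ : ℝ) (s : Set ℕ) : ℕ → ℤ
  | 0 => ⌈9 * μ + 1 / 8⌉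
  | k + 1 => next μ (k + 1) (center μ s k) (s.indicator 1 k)

lemma center_pos (hμ : 0 < μ) (s : Set ℕ) (k : ℕ) : 0 < center μ s k := by
  induction k with
  | zero => exact Int.ceil_pos.2 (by positivity)
  | succ k ih => exact next_pos hμ _ ih (indicator_one_nonneg s k)

lemma nine_le_lower_center (hμ : 0 < μ) (s : Set ℕ) (k : ℕ) :
    9 ≤ lower μ (k + 1) (center μ s k) := by
  induction k with
  | zero =>
    change 9 ≤ root μ 1 _
    rw [le_root_iff hμ one_ne_zero (sub_eighth_nonneg (center_pos hμ s 0)) (by norm_num)]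
    have := Int.le_ceil (9 * μ + 1 / 8)
    simp only [center, pow_one]
    linarith
  | succ k ih =>
    exact ih.trans (lower_le_lower_next hμ _ (center_pos hμ s k) (indicator_one_nonneg s k))

lemma monotone_lower_center (hμ : 0 < μ) (s : Set ℕ) :
    Monotone fun k => lower μ (k + 1) (center μ s k) :=
  monotone_nat_of_le_succ fun k =>
    lower_le_lower_next hμ _ (center_pos hμ s k) (indicator_one_nonneg s k)

lemma antitone_upper_center (hμ : 0 < μ) (s : Set ℕ) :
    Antitone fun k => upper μ (k + 1) (center μ s k) :=
  antitone_nat_of_succ_le fun k =>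
    upper_next_le_upper hμ k.add_one_ne_zero (center_pos hμ s k) (indicator_one_nonneg s k)
      (indicator_one_le_one s k) (nine_le_lower_center hμ s k)

noncomputable def alpha (μ : ℝ) (s : Set ℕ) : ℝ := ⨆ k, lower μ (k + 1) (center μ s k)

lemma alpha_mem_Icc (hμ : 0 < μ) (s : Set ℕ) (k : ℕ) :
    alpha μ s ∈ Icc (lower μ (k + 1) (center μ s k)) (upper μ (k + 1) (center μ s k)) :=
  mem_iInter.1 ((monotone_lower_center hμ s).ciSup_mem_iInter_Icc_of_antitone
    (antitone_upper_center hμ s)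
    fun k => lower_le_upper hμ k.add_one_ne_zero (center_pos hμ s k)) k

lemma nine_le_alpha (hμ : 0 < μ) (s : Set ℕ) : 9 ≤ alpha μ s :=
  (nine_le_lower_center hμ s 0).trans (alpha_mem_Icc hμ s 0).1

lemma abs_mul_alpha_pow_sub_center_le (hμ : 0 < μ) (s : Set ℕ) (k : ℕ) :
    |μ * alpha μ s ^ (k + 1) - center μ s k| ≤ 1 / 8 :=
  abs_mul_pow_sub_le hμ k.add_one_ne_zero (center_pos hμ s k) (alpha_mem_Icc hμ s k)

lemma alpha_injective (hμ : 0 < μ) : Function.Injective (alpha μ) := by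
  intro s t hst
  have hcenter (k : ℕ) : center μ s k = center μ t k :=
    Int.eq_of_abs_sub_le (by norm_num) (abs_mul_alpha_pow_sub_center_le hμ s k)
      (hst ▸ abs_mul_alpha_pow_sub_center_le hμ t k)
  refine indicator_one_inj ℤ (funext fun k => ?_)
  have := hcenter (k + 1)
  simp only [center, next, hcenter k] at this
  omega

end NearIntPowers

theorem uncountably_many_badly_distributed (lam : ℝ) (hlam : lam ≠ 0) :
    ¬ {α : ℝ | 1 < α ∧ ¬ UDMod1 (fun n => lam * α ^ n)}.Countable := by
  have hμ : 0 < |lam| := abs_pos.2 hlam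
  refine not_countable_of_injective_set_nat (NearIntPowers.alpha_injective hμ)
    fun s => ⟨?_, not_UDMod1_of_forall_abs_sub_int_le _ fun n hn => ?_⟩
  · linarith [NearIntPowers.nine_le_alpha hμ s]
  · obtain ⟨k, rfl⟩ := Nat.exists_eq_add_of_le' hn
    exact exists_abs_mul_sub_int_le (NearIntPowers.abs_mul_alpha_pow_sub_center_le hμ s k)
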